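/- arXiv:1106.1196 — 9 statements merged into one kernel-verified Lean document; each statement's English description precedes it below -/
import Mathlib

section
/- If Y ⊆ ℝ is type-complete at every point of ℝ and at both infinities, then Y is a finite union of open intervals and singletons. -/
/-- If `Y ⊆ ℝ` is type-complete at every point of `ℝ` and at both infinities,
then `Y` is a finite union of open intervals and singletons. -/
theorem stmt_0 (Y : Set ℝ)
    (htc : ∀ a : ℝ,
      (∃ b < a, Set.Ioo b a ⊆ Y ∨ Disjoint (Set.Ioo b a) Y) ∧
      (∃ c > a, Set.Ioo a c ⊆ Y ∨ Disjoint (Set.Ioo a c) Y))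
    (hneg : ∃ b : ℝ, Set.Iio b ⊆ Y ∨ Disjoint (Set.Iio b) Y)
    (hpos : ∃ b : ℝ, Set.Ioi b ⊆ Y ∨ Disjoint (Set.Ioi b) Y) :
    ∃ S : Finset (Set ℝ), Y = ⋃₀ ↑S ∧
      ∀ s ∈ S, (IsOpen s ∧ s.OrdConnected) ∨ ∃ x : ℝ, s = {x} := by
  classical
  choose b hb hbY using fun a => (htc a).1
  choose c hc hcY using fun a => (htc a).2
  obtain ⟨L, hL⟩ := hneg
  obtain ⟨R, hR⟩ := hpos
  -- helper: intersecting Y with a homogeneous nice set is nice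
  have hgood : ∀ u : Set ℝ, (u ⊆ Y ∨ Disjoint u Y) → IsOpen u → u.OrdConnected →
      IsOpen (Y ∩ u) ∧ (Y ∩ u).OrdConnected := by
    intro u hu hop hoc
    rcases hu with hu | hu
    · rw [Set.inter_eq_right.mpr hu]; exact ⟨hop, hoc⟩
    · rw [Set.inter_comm, Set.disjoint_iff_inter_eq_empty.mp hu]
      exact ⟨isOpen_empty, Set.ordConnected_empty⟩
  have hcov : Set.Icc L R ⊆ ⋃ a : ℝ, Set.Ioo (b a) (c a) := fun x _ =>
    Set.mem_iUnion.2 ⟨x, hb x, hc x⟩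
  obtain ⟨t, ht⟩ := isCompact_Icc.elim_finite_subcover
    (fun a => Set.Ioo (b a) (c a)) (fun a => isOpen_Ioo) hcov
  set P1 : ℝ → Set ℝ := fun a => Y ∩ Set.Ioo (b a) a with hP1
  set P2 : ℝ → Set ℝ := fun a => Y ∩ {a} with hP2
  set P3 : ℝ → Set ℝ := fun a => Y ∩ Set.Ioo a (c a) with hP3
  refine ⟨insert (Y ∩ Set.Iio L) (insert (Y ∩ Set.Ioi R)
    (t.image P1 ∪ t.image P2 ∪ t.image P3)), ?_, ?_⟩
  · apply Set.Subset.antisymm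
    · intro y hy
      by_cases h1 : y < L
      · exact Set.mem_sUnion.2 ⟨Y ∩ Set.Iio L, by simp, ⟨hy, h1⟩⟩
      by_cases h2 : R < y
      · exact Set.mem_sUnion.2 ⟨Y ∩ Set.Ioi R, by simp, ⟨hy, h2⟩⟩
      have hyK : y ∈ Set.Icc L R := ⟨le_of_not_gt h1, le_of_not_gt h2⟩
      have := ht hyK
      simp only [Set.mem_iUnion] at this
      obtain ⟨a, hat, hy1, hy2⟩ := this
      rcases lt_trichotomy y a with h | h | h
      · refine Set.mem_sUnion.2 ⟨P1 a, ?_, ⟨hy, hy1, h⟩⟩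
        simp only [Finset.coe_insert, Finset.coe_union, Finset.coe_image,
          Set.mem_insert_iff, Set.mem_union, Set.mem_image]
        exact Or.inr (Or.inr (Or.inl (Or.inl ⟨a, hat, rfl⟩)))
      · refine Set.mem_sUnion.2 ⟨P2 a, ?_, ⟨hy, h⟩⟩
        simp only [Finset.coe_insert, Finset.coe_union, Finset.coe_image,
          Set.mem_insert_iff, Set.mem_union, Set.mem_image]
        exact Or.inr (Or.inr (Or.inl (Or.inr ⟨a, hat, rfl⟩)))
      · refine Set.mem_sUnion.2 ⟨P3 a, ?_, ⟨hy, h, hy2⟩⟩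
        simp only [Finset.coe_insert, Finset.coe_union, Finset.coe_image,
          Set.mem_insert_iff, Set.mem_union, Set.mem_image]
        exact Or.inr (Or.inr (Or.inr ⟨a, hat, rfl⟩))
    · apply Set.sUnion_subset
      intro s hs
      simp only [Finset.mem_coe, Finset.mem_insert, Finset.mem_union,
        Finset.mem_image] at hs
      rcases hs with rfl | rfl | (⟨a, _, rfl⟩ | ⟨a, _, rfl⟩) | ⟨a, _, rfl⟩ <;>
        exact Set.inter_subset_left
  · intro s hs
    simp only [Finset.mem_insert, Finset.mem_union, Finset.mem_image] at hs
    rcases hs with rfl | rfl | (⟨a, _, rfl⟩ | ⟨a, _, rfl⟩) | ⟨a, _, rfl⟩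
    · exact Or.inl (hgood _ hL isOpen_Iio Set.ordConnected_Iio)
    · exact Or.inl (hgood _ hR isOpen_Ioi Set.ordConnected_Ioi)
    · exact Or.inl (hgood _ (hbY a) isOpen_Ioo Set.ordConnected_Ioo)
    · rcases (em (a ∈ Y)) with h | h
      · refine Or.inr ⟨a, ?_⟩
        simp only [hP2]
        rw [Set.inter_eq_right.mpr (by simpa using h)]
      · refine Or.inl ?_
        have : P2 a = ∅ := by
          simp only [hP2]
          rw [Set.inter_comm]
          exact Set.singleton_inter_eq_empty.mpr h
        rw [this]
        exact ⟨isOpen_empty, Set.ordConnected_empty⟩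
    · exact Or.inl (hgood _ (hcY a) isOpen_Ioo Set.ordConnected_Ioo)
end

section
/- Let M be a densely linearly ordered set without endpoints, equipped with the order topology, and let Y ⊆ M be type-complete at every point of M. Then either Y has nonempty interior, or Y is discrete in the subspace topology. -/
/-!
An open interval inside `Y` would be interior, so when `Y` has empty interior type-completeness
leaves, at each point `a`, an interval `(b, c)` around `a` whose two halves miss `Y`; this interval
isolates `a` in `Y`.
-/

open Set

lemma IsOpen.disjoint_of_interior_eq_empty {X : Type*} [TopologicalSpace X] {s Y : Set X}
    (hs : IsOpen s) (hY : interior Y = ∅) (h : s ⊆ Y ∨ Disjoint s Y) : Disjoint s Y := by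
  rcases h with hsub | hdisj
  · have hs_empty : s = ∅ := subset_empty_iff.mp (hY ▸ interior_maximal hsub hs)
    exact hs_empty ▸ empty_disjoint Y
  · exact hdisj

lemma Set.Ioo_inter_eq_singleton_of_disjoint {M : Type*} [LinearOrder M] {Y : Set M} {a b c : M}
    (ha : a ∈ Y) (hb : b < a) (hc : a < c) (hl : Disjoint (Ioo b a) Y)
    (hr : Disjoint (Ioo a c) Y) : Ioo b c ∩ Y = {a} := by
  ext y
  refine ⟨fun ⟨⟨hby, hyc⟩, hy⟩ => ?_, fun hy => hy ▸ ⟨⟨hb, hc⟩, ha⟩⟩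
  rcases lt_trichotomy y a with hya | rfl | hay
  · exact (disjoint_left.mp hl ⟨hby, hya⟩ hy).elim
  · rfl
  · exact (disjoint_left.mp hr ⟨hay, hyc⟩ hy).elim

theorem stmt_1_general {M : Type*} [LinearOrder M] [TopologicalSpace M]
    [OrderTopology M] (Y : Set M)
    (htc : ∀ a : M,
      (∃ b < a, Set.Ioo b a ⊆ Y ∨ Disjoint (Set.Ioo b a) Y) ∧
      (∃ c > a, Set.Ioo a c ⊆ Y ∨ Disjoint (Set.Ioo a c) Y)) :
    (interior Y).Nonempty ∨ DiscreteTopology Y := by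
  rcases (interior Y).eq_empty_or_nonempty with hY | hY
  · right
    rw [discreteTopology_subtype_iff']
    intro a ha
    obtain ⟨⟨b, hb, hl⟩, ⟨c, hc, hr⟩⟩ := htc a
    exact ⟨Ioo b c, isOpen_Ioo, Ioo_inter_eq_singleton_of_disjoint ha hb hc
      (isOpen_Ioo.disjoint_of_interior_eq_empty hY hl)
      (isOpen_Ioo.disjoint_of_interior_eq_empty hY hr)⟩
  · exact Or.inl hY

/-- In a dense linear order without endpoints with its order topology, a set which is
type-complete at every point either has nonempty interior or is discrete. -/
theorem stmt_1 {M : Type*} [LinearOrder M] [DenselyOrdered M] [NoMinOrder M] [NoMaxOrder M]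
    [TopologicalSpace M] [OrderTopology M] (Y : Set M)
    (htc : ∀ a : M,
      (∃ b < a, Set.Ioo b a ⊆ Y ∨ Disjoint (Set.Ioo b a) Y) ∧
      (∃ c > a, Set.Ioo a c ⊆ Y ∨ Disjoint (Set.Ioo a c) Y)) :
    (interior Y).Nonempty ∨ DiscreteTopology Y :=
  stmt_1_general Y htc
end

section
/- Let Y ⊆ ℝ be discrete in the subspace topology and type-complete at every point of ℝ and at ±∞. Then Y is closed and bounded, and if Y is nonempty it has a minimum and a maximum. -/
open Set Topology Filter

/-- A discrete, everywhere type-complete subset of `ℝ` is closed and bounded, and if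
nonempty it has a minimum and a maximum. -/
theorem stmt_2 (Y : Set ℝ) (hdisc : DiscreteTopology Y)
    (htc : ∀ a : ℝ,
      (∃ b < a, Set.Ioo b a ⊆ Y ∨ Disjoint (Set.Ioo b a) Y) ∧
      (∃ c > a, Set.Ioo a c ⊆ Y ∨ Disjoint (Set.Ioo a c) Y))
    (hneg : ∃ b : ℝ, Set.Iio b ⊆ Y ∨ Disjoint (Set.Iio b) Y)
    (hpos : ∃ b : ℝ, Set.Ioi b ⊆ Y ∨ Disjoint (Set.Ioi b) Y) :
    IsClosed Y ∧ Bornology.IsBounded Y ∧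
      (Y.Nonempty → (∃ m, IsLeast Y m) ∧ (∃ M, IsGreatest Y M)) := by
  rw [discreteTopology_subtype_iff] at hdisc
  -- no nonempty open interval is contained in Y
  have key : ∀ b a : ℝ, b < a → ¬ (Set.Ioo b a ⊆ Y) := by
    intro b a hba hsub
    set y : ℝ := (b + a) / 2 with hy
    have hyY : y ∈ Set.Ioo b a := ⟨by linarith, by linarith⟩
    have hymem : y ∈ Y := hsub hyY
    have hbot := hdisc y hymem
    have h1 : Set.Ioo y a ⊆ {y}ᶜ ∩ Y := fun z hz =>
      ⟨by simp [ne_of_gt hz.1], hsub ⟨lt_trans hyY.1 hz.1, hz.2⟩⟩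
    have h2 : y ∈ closure (Set.Ioo y a) := by
      rw [closure_Ioo (ne_of_lt hyY.2)]
      exact ⟨le_refl _, le_of_lt hyY.2⟩
    have h3 : y ∈ closure ({y}ᶜ ∩ Y) := closure_mono h1 h2
    rw [mem_closure_iff_nhdsWithin_neBot, nhdsWithin] at h3
    rw [nhdsWithin, inf_assoc, Filter.inf_principal] at hbot
    exact h3.ne hbot
  -- hence all type-completeness witnesses are disjointness
  have htc' : ∀ a : ℝ, ∃ b < a, ∃ c > a,
      Disjoint (Set.Ioo b a) Y ∧ Disjoint (Set.Ioo a c) Y := by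
    intro a
    obtain ⟨⟨b, hb, hb'⟩, ⟨c, hc, hc'⟩⟩ := htc a
    refine ⟨b, hb, c, hc, ?_, ?_⟩
    · rcases hb' with h | h
      · exact absurd h (key b a hb)
      · exact h
    · rcases hc' with h | h
      · exact absurd h (key a c hc)
      · exact h
  obtain ⟨bn, hbn⟩ := hneg
  have hbn' : Disjoint (Set.Iio bn) Y := by
    rcases hbn with h | h
    · exact absurd (fun z hz => h (show z ∈ Set.Iio bn by
        simp only [Set.mem_Ioo] at hz; simp only [Set.mem_Iio]; linarith [hz.2]))
        (key (bn - 2) (bn - 1) (by linarith))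
    · exact h
  obtain ⟨bp, hbp⟩ := hpos
  have hbp' : Disjoint (Set.Ioi bp) Y := by
    rcases hbp with h | h
    · exact absurd (fun z hz => h (show z ∈ Set.Ioi bp by
        simp only [Set.mem_Ioo] at hz; simp only [Set.mem_Ioi]; linarith [hz.1]))
        (key (bp + 1) (bp + 2) (by linarith))
    · exact h
  have hclosed : IsClosed Y := by
    rw [← isOpen_compl_iff, isOpen_iff_mem_nhds]
    intro a ha
    obtain ⟨b, hb, c, hc, hd1, hd2⟩ := htc' a
    have : Set.Ioo b c ⊆ Yᶜ := by
      intro z hz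
      rcases lt_trichotomy z a with h | h | h
      · exact fun hzY => hd1.ne_of_mem ⟨hz.1, h⟩ hzY rfl
      · exact h ▸ ha
      · exact fun hzY => hd2.ne_of_mem ⟨h, hz.2⟩ hzY rfl
    exact Filter.mem_of_superset (Ioo_mem_nhds hb hc) this
  have hsub : Y ⊆ Set.Icc bn bp := by
    intro z hz
    constructor
    · by_contra h
      exact hbn'.ne_of_mem (by simpa using lt_of_not_ge h) hz rfl
    · by_contra h
      exact hbp'.ne_of_mem (by simpa using lt_of_not_ge h) hz rfl
  refine ⟨hclosed, (Bornology.IsBounded.subset (Metric.isBounded_Icc bn bp) hsub), ?_⟩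
  intro hne
  have hbdB : BddBelow Y := ⟨bn, fun z hz => (hsub hz).1⟩
  have hbdA : BddAbove Y := ⟨bp, fun z hz => (hsub hz).2⟩
  exact ⟨⟨sInf Y, hclosed.isLeast_csInf hne hbdB⟩,
    ⟨sSup Y, hclosed.isGreatest_csSup hne hbdA⟩⟩
end

section
/- Let Y ⊆ ℝ be type-complete at every point of ℝ and at ±∞. Then the topological boundary ∂Y = closure(Y) \ interior(Y) is discrete, closed, and bounded. -/
/-- If `Y ⊆ ℝ` is type-complete at every point and at `±∞`, then its topological
boundary is discrete, closed, and bounded. -/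
theorem stmt_3 (Y : Set ℝ)
    (htc : ∀ a : ℝ,
      (∃ b < a, Set.Ioo b a ⊆ Y ∨ Disjoint (Set.Ioo b a) Y) ∧
      (∃ c > a, Set.Ioo a c ⊆ Y ∨ Disjoint (Set.Ioo a c) Y))
    (hneg : ∃ b : ℝ, Set.Iio b ⊆ Y ∨ Disjoint (Set.Iio b) Y)
    (hpos : ∃ b : ℝ, Set.Ioi b ⊆ Y ∨ Disjoint (Set.Ioi b) Y) :
    DiscreteTopology (closure Y \ interior Y : Set ℝ) ∧
      IsClosed (closure Y \ interior Y) ∧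
      Bornology.IsBounded (closure Y \ interior Y) := by
  have hfr : closure Y \ interior Y = frontier Y := rfl
  rw [hfr]
  have key : ∀ I : Set ℝ, IsOpen I → (I ⊆ Y ∨ Disjoint I Y) → Disjoint I (frontier Y) := by
    intro I hI h
    rcases h with h | h
    · have hsub : I ⊆ interior Y := interior_maximal h hI
      exact Set.disjoint_left.2 fun x hx hfx => hfx.2 (hsub hx)
    · have hsub : I ⊆ interior Yᶜ := interior_maximal h.subset_compl_right hI
      rw [interior_compl] at hsub
      exact Set.disjoint_left.2 fun x hx hfx => hsub hx hfx.1
  refine ⟨?_, isClosed_frontier, ?_⟩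
  · rw [discreteTopology_subtype_iff]
    intro x hx
    obtain ⟨⟨b, hb, hbY⟩, ⟨c, hc, hcY⟩⟩ := htc x
    have h1 := key _ isOpen_Ioo hbY
    have h2 := key _ isOpen_Ioo hcY
    rw [Filter.inf_principal_eq_bot, mem_nhdsWithin]
    refine ⟨Set.Ioo b c, isOpen_Ioo, ⟨hb, hc⟩, ?_⟩
    rintro y ⟨⟨hyb, hyc⟩, hyx⟩ hyf
    rcases lt_or_gt_of_ne (fun h => hyx h) with h | h
    · exact Set.disjoint_left.1 h1 ⟨hyb, h⟩ hyf
    · exact Set.disjoint_left.1 h2 ⟨h, hyc⟩ hyf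
  · obtain ⟨b, hb⟩ := hneg
    obtain ⟨c, hc⟩ := hpos
    have h1 := key _ isOpen_Iio hb
    have h2 := key _ isOpen_Ioi hc
    refine (Metric.isBounded_Icc b c).subset fun x hx => ?_
    constructor
    · by_contra h
      exact Set.disjoint_left.1 h1 (lt_of_not_ge h) hx
    · by_contra h
      exact Set.disjoint_left.1 h2 (lt_of_not_ge h) hx
end

section
/- Let M be a linearly ordered set with the order topology, K ⊆ M a compact set, and Y ⊆ K. Suppose every point x ∈ K has an open neighborhood U such that Y ∩ U is order-convex. Then Y is a finite union of order-convex sets. -/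
/-- If `K` is compact in a linear order with the order topology, `Y ⊆ K`, and every
point of `K` has an open neighborhood whose intersection with `Y` is order-convex,
then `Y` is a finite union of order-convex sets. -/
theorem stmt_5 {M : Type*} [LinearOrder M] [TopologicalSpace M] [OrderTopology M]
    (K Y : Set M) (hK : IsCompact K) (hYK : Y ⊆ K)
    (h : ∀ x ∈ K, ∃ U : Set M, IsOpen U ∧ x ∈ U ∧ (Y ∩ U).OrdConnected) :
    ∃ S : Finset (Set M), Y = ⋃₀ ↑S ∧ ∀ s ∈ S, s.OrdConnected := by
  classical
  choose! U hopen hmem hconv using h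
  obtain ⟨t, htK, htfin, hcover⟩ := hK.elim_finite_subcover_image
    (fun x hx => hopen x hx) (fun x hx => Set.mem_biUnion hx (hmem x hx))
  refine ⟨Finset.image (fun x => Y ∩ U x) htfin.toFinset, ?_, ?_⟩
  · ext y
    simp only [Finset.coe_image, Set.sUnion_image, Set.mem_iUnion, Set.mem_inter_iff,
      Set.Finite.coe_toFinset]
    constructor
    · intro hy
      obtain ⟨x, hx, hyx⟩ := Set.mem_iUnion₂.mp (hcover (hYK hy))
      exact ⟨x, hx, hy, hyx⟩
    · rintro ⟨x, _, hy, _⟩; exact hy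
  · intro s hs
    simp only [Finset.mem_image, Set.Finite.mem_toFinset] at hs
    obtain ⟨x, hx, rfl⟩ := hs
    exact hconv x (htK hx)
end

section
/- Let G be a linearly ordered abelian group, define |z| = max(z, -z), and let D ⊆ G be a finite nonempty subset. If f : D → D satisfies |f(x) - f(y)| < |x - y| for all x ≠ y in D, then f has a unique fixed point. -/
/-!
Minimise `x ↦ d (f x) x` over the finite set `D`. At a minimiser `x`, if `f x ≠ x` then
contraction applied to the pair `f x, x` gives a smaller value at `f x`; so `x` is fixed.
Two distinct fixed points `x, y` would give `d x y < d x y`.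
-/

section Contracting

open Function

variable {α β : Type*} [LinearOrder β] {f : α → α} {d : α → α → β}

theorem Set.eq_of_isFixedPt_of_contracting {D : Set α}
    (hcontr : ∀ x ∈ D, ∀ y ∈ D, x ≠ y → d (f x) (f y) < d x y)
    {x y : α} (hx : x ∈ D) (hy : y ∈ D) (hfx : IsFixedPt f x) (hfy : IsFixedPt f y) : x = y := by
  by_contra hne
  simpa [hfx.eq, hfy.eq] using hcontr x hx y hy hne

theorem Finset.exists_isFixedPt_of_contracting {D : Finset α} (hD : D.Nonempty)
    (hfD : ∀ x ∈ D, f x ∈ D) (hcontr : ∀ x ∈ D, ∀ y ∈ D, x ≠ y → d (f x) (f y) < d x y) :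
    ∃ x ∈ D, IsFixedPt f x := by
  obtain ⟨x, hx, hmin⟩ := D.exists_min_image (fun x => d (f x) x) hD
  refine ⟨x, hx, ?_⟩
  by_contra hne
  exact (hmin (f x) (hfD x hx)).not_gt (hcontr (f x) (hfD x hx) x hx hne)

theorem Finset.existsUnique_isFixedPt_of_contracting {D : Finset α} (hD : D.Nonempty)
    (hfD : ∀ x ∈ D, f x ∈ D) (hcontr : ∀ x ∈ D, ∀ y ∈ D, x ≠ y → d (f x) (f y) < d x y) :
    ∃! x, x ∈ D ∧ IsFixedPt f x := by
  obtain ⟨x, hx, hfx⟩ := exists_isFixedPt_of_contracting hD hfD hcontr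
  exact ⟨x, ⟨hx, hfx⟩, fun y ⟨hy, hfy⟩ =>
    Set.eq_of_isFixedPt_of_contracting (D := ↑D) hcontr hy hx hfy hfx⟩

end Contracting

/-- A contractive self-map of a finite nonempty subset of a linearly ordered abelian
group has a unique fixed point. -/
theorem stmt_11 {G : Type*} [AddCommGroup G] [LinearOrder G] [IsOrderedAddMonoid G] (D : Finset G)
    (hD : D.Nonempty) (f : G → G) (hfD : ∀ x ∈ D, f x ∈ D)
    (hcontr : ∀ x ∈ D, ∀ y ∈ D, x ≠ y → max (f x - f y) (-(f x - f y)) < max (x - y) (-(x - y))) :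
    ∃! x, x ∈ D ∧ f x = x :=
  D.existsUnique_isFixedPt_of_contracting (d := fun x y => max (x - y) (-(x - y))) hD hfD hcontr
end

section
/- Let G be a linearly ordered abelian group, |z| = max(z, -z), and D ⊆ G a finite nonempty subset. If f : D → D satisfies |f(x) - f(y)| ≤ |x - y| for all x, y in D, then f∘f has a fixed point, i.e., there exists x ∈ D with f(f(x)) = x. -/
/-!
Let `x₀` minimise the displacement `|f x - x|` over `D` and put `e = f x₀ - x₀`. Since `f` is
`1`-Lipschitz, it maps a minimiser `x` to a minimiser with `f (f x) - f x = ±(f x - x)`, and the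
sign `-` says `f (f x) = x`. If that never happens, the points of `D` with signed displacement `e`
form an `f`-invariant finite set on which `f` is translation by `e`; comparing its maximum and its
minimum with their images forces `e = 0`, so `x₀` is fixed.
-/

theorem eq_zero_of_mapsTo_of_sub_eq {G : Type*} [AddCommGroup G] [LinearOrder G]
    [IsOrderedAddMonoid G] {S : Finset G} (hS : S.Nonempty) {f : G → G}
    (hf : Set.MapsTo f S S) {e : G} (he : ∀ x ∈ S, f x - x = e) : e = 0 := by
  apply le_antisymm
  · rw [← he _ (S.max'_mem hS), sub_nonpos]
    exact S.le_max' _ (hf (S.max'_mem hS))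
  · rw [← he _ (S.min'_mem hS), sub_nonneg]
    exact S.min'_le _ (hf (S.min'_mem hS))

theorem map_map_sub_eq_or_map_map_eq_of_isMinOn {G : Type*} [AddCommGroup G] [LinearOrder G]
    [IsOrderedAddMonoid G] {D : Finset G} {f : G → G} (hfD : ∀ x ∈ D, f x ∈ D)
    (hlip : ∀ x ∈ D, ∀ y ∈ D, |f x - f y| ≤ |x - y|) {x : G} (hx : x ∈ D)
    (hmin : IsMinOn (fun y => |f y - y|) D x) :
    f (f x) - f x = f x - x ∨ f (f x) = x := by
  have habs : |f (f x) - f x| = |f x - x| :=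
    le_antisymm (hlip _ (hfD x hx) x hx) (hmin (hfD x hx))
  rcases abs_eq_abs.1 habs with h | h
  · exact Or.inl h
  · rw [neg_sub, sub_left_inj] at h
    exact Or.inr h

/-- A weakly contractive self-map `f` of a finite nonempty subset of a linearly
ordered abelian group has a fixed point for `f ∘ f`. -/
theorem stmt_12 {G : Type*} [AddCommGroup G] [LinearOrder G] [IsOrderedAddMonoid G] (D : Finset G)
    (hD : D.Nonempty) (f : G → G) (hfD : ∀ x ∈ D, f x ∈ D)
    (hcontr : ∀ x ∈ D, ∀ y ∈ D, max (f x - f y) (-(f x - f y)) ≤ max (x - y) (-(x - y))) :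
    ∃ x ∈ D, f (f x) = x := by
  have hlip : ∀ x ∈ D, ∀ y ∈ D, |f x - f y| ≤ |x - y| := by
    simpa only [← abs_eq_max_neg] using hcontr
  by_contra! hno
  obtain ⟨x₀, hx₀, hmin⟩ := D.exists_min_image (fun x => |f x - x|) hD
  set S := D.filter (fun x => f x - x = f x₀ - x₀)
  have hS : Set.MapsTo f S S := by
    intro x hx
    rw [Finset.mem_coe, Finset.mem_filter] at hx ⊢
    have hxmin : IsMinOn (fun y => |f y - y|) D x :=
      isMinOn_iff.2 fun y hy => (congrArg abs hx.2).trans_le (hmin y hy)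
    exact ⟨hfD x hx.1, ((map_map_sub_eq_or_map_map_eq_of_isMinOn hfD hlip hx.1 hxmin).resolve_right
      (hno x hx.1)).trans hx.2⟩
  have hx₀S : x₀ ∈ S := Finset.mem_filter.2 ⟨hx₀, rfl⟩
  have hfix : f x₀ = x₀ := sub_eq_zero.1 <|
    eq_zero_of_mapsTo_of_sub_eq ⟨x₀, hx₀S⟩ hS fun x hx => (Finset.mem_filter.1 hx).2
  exact hno x₀ hx₀ (by rw [hfix, hfix])
end

section
/- Let G be a linearly ordered abelian group equipped with its order topology. If G is connected as a topological space, then G is divisible: for every x ∈ G and every positive integer n there exists y ∈ G with n·y = x. -/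
theorem nsmul_surjective_of_connectedSpace {G : Type*} [AddCommGroup G] [LinearOrder G]
    [IsOrderedAddMonoid G] [TopologicalSpace G] [OrderTopology G] [ConnectedSpace G]
    {n : ℕ} (hn : n ≠ 0) : Function.Surjective fun y : G => n • y := by
  intro x
  have hupper : |x| ≤ n • |x| := le_self_nsmul (abs_nonneg x) hn
  have hbounds : x ∈ Set.Icc (n • -|x|) (n • |x|) := by
    rw [smul_neg]
    exact ⟨(neg_le_neg hupper).trans (neg_abs_le x), (le_abs_self x).trans hupper⟩
  exact intermediate_value_univ (-|x|) |x| (continuous_nsmul n) hbounds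

/-- A linearly ordered abelian group which is connected in its order topology is
divisible. -/
theorem stmt_13 {G : Type*} [AddCommGroup G] [LinearOrder G] [IsOrderedAddMonoid G] [TopologicalSpace G]
    [OrderTopology G] (hconn : ConnectedSpace G) :
    ∀ x : G, ∀ n : ℕ, 0 < n → ∃ y : G, n • y = x :=
  fun x _ hn => nsmul_surjective_of_connectedSpace hn.ne' x
end

section
/- Let M be a densely linearly ordered set without endpoints with its order topology, Y ⊆ M, and l ∈ M a greatest lower bound of Y (i.e., l ≤ y for all y ∈ Y, and any lower bound t of Y satisfies t ≤ l). If Y is type-complete at l and Y is nonempty, then l lies in the closure of Y but not in the interior of Y; in particular l is a topological boundary point of Y. -/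
/-- In a dense linear order without endpoints, if `l` is a greatest lower bound of a
nonempty set `Y` which is type-complete at `l`, then `l` is in the closure but not in
the interior of `Y`; in particular it is a boundary point. -/
theorem stmt_16 {M : Type*} [LinearOrder M] [DenselyOrdered M] [NoMinOrder M]
    [NoMaxOrder M] [TopologicalSpace M] [OrderTopology M] (Y : Set M) (l : M)
    (hglb : IsGLB Y l) (hY : Y.Nonempty)
    (htc : (∃ b < l, Set.Ioo b l ⊆ Y ∨ Disjoint (Set.Ioo b l) Y) ∧
           (∃ c > l, Set.Ioo l c ⊆ Y ∨ Disjoint (Set.Ioo l c) Y)) :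
    l ∈ closure Y ∧ l ∉ interior Y ∧ l ∈ closure Y \ interior Y := by
  have hcl : l ∈ closure Y := hglb.mem_closure hY
  have hint : l ∉ interior Y := by
    intro h
    obtain ⟨a, b, ⟨ha, hb⟩, hsub⟩ := (mem_nhds_iff_exists_Ioo_subset).1 (mem_interior_iff_mem_nhds.1 h)
    obtain ⟨x, hx1, hx2⟩ := exists_between ha
    exact absurd (hglb.1 (hsub ⟨hx1, lt_trans hx2 hb⟩)) (not_le.2 hx2)
  exact ⟨hcl, hint, hcl, hint⟩
end
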